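/- arXiv:math/9908146 — 2 statements merged into one kernel-verified Lean document; each statement's English description precedes it below -/
import Mathlib

section
/- For every integer n >= 2, 2x times the derivative of P_n^{(alpha,alpha)}(x) equals 2n P_n^{(alpha,alpha)}(x) + (n+alpha) P_{n-2}^{(alpha+1,alpha+1)}(x). -/
/-!
In the variable `t = (x - 1) / 2` the Jacobi polynomial is `∑ c k * t ^ k`, and `2 x d/dx` becomes
`(2 t + 1) d/dt`. The identity is then a comparison of coefficients: for `k ≤ n - 2` the
Pochhammer coefficients satisfy `(k + 1) c (k + 1) = 2 (n - k) c k + (n + α) d k`, where `d` are the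
coefficients of `P_{n-2}^{(α+1,α+1)}`, and at the top `n c n = 2 c (n - 1)`; both hold only because
`β = α`.
-/

noncomputable def poch (a : ℝ) (k : ℕ) : ℝ := ∏ m ∈ Finset.range k, (a + m)

noncomputable def lag (α : ℝ) (n : ℕ) (x : ℝ) : ℝ :=
  ∑ k ∈ Finset.range (n + 1),
    (-1) ^ k * (poch (α + k + 1) (n - k) / (n - k).factorial) * x ^ k / k.factorial

noncomputable def jacobi (α β : ℝ) (n : ℕ) (x : ℝ) : ℝ :=
  ∑ k ∈ Finset.range (n + 1),
    poch ((n : ℝ) + α + β + 1) k * poch (α + k + 1) (n - k) /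
      (k.factorial * (n - k).factorial) * ((x - 1) / 2) ^ k

noncomputable def charlier (a : ℝ) (n : ℕ) (x : ℝ) : ℝ :=
  ∑ m ∈ Finset.range (n + 1),
    (∏ j ∈ Finset.range m, (x - (j : ℝ))) / m.factorial * (-a) ^ (n - m) / (n - m).factorial

open Finset

lemma poch_succ_right (a : ℝ) (k : ℕ) : poch a (k + 1) = poch a k * (a + k) :=
  prod_range_succ _ _

lemma poch_succ_left (a : ℝ) (k : ℕ) : poch a (k + 1) = a * poch (a + 1) k := by
  simp only [poch, prod_range_succ', Nat.cast_succ, Nat.cast_zero, add_zero, ← add_assoc,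
    add_right_comm a _ 1, mul_comm]

noncomputable def jacobiCoeff (α β : ℝ) (n k : ℕ) : ℝ :=
  poch ((n : ℝ) + α + β + 1) k * poch (α + k + 1) (n - k) / (k.factorial * (n - k).factorial)

lemma jacobi_eq_sum (α β : ℝ) (n : ℕ) (x : ℝ) :
    jacobi α β n x = ∑ k ∈ range (n + 1), jacobiCoeff α β n k * ((x - 1) / 2) ^ k :=
  rfl

lemma hasDerivAt_sum_range_mul_pow {𝕜 : Type*} [NontriviallyNormedField 𝕜] (a : ℕ → 𝕜) (N : ℕ)
    (t : 𝕜) :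
    HasDerivAt (fun t ↦ ∑ k ∈ range (N + 1), a k * t ^ k)
      (∑ k ∈ range N, (k + 1) * a (k + 1) * t ^ k) t := by
  refine (HasDerivAt.fun_sum fun k _ ↦ (hasDerivAt_pow k t).const_mul (a k)).congr_deriv ?_
  rw [sum_range_succ']
  simp only [Nat.cast_succ, Nat.add_sub_cancel, Nat.cast_zero, zero_mul, mul_zero, add_zero]
  exact sum_congr rfl fun k _ ↦ by ring

lemma mul_sum_range_succ_mul_pow {R : Type*} [CommSemiring R] (a : ℕ → R) (N : ℕ) (t : R) :
    t * ∑ k ∈ range N, (k + 1) * a (k + 1) * t ^ k = ∑ k ∈ range (N + 1), k * a k * t ^ k := by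
  rw [sum_range_succ', mul_sum]
  simp only [Nat.cast_succ, Nat.cast_zero, zero_mul, add_zero]
  exact sum_congr rfl fun k _ ↦ by ring

lemma hasDerivAt_jacobi (α β : ℝ) (n : ℕ) (x : ℝ) :
    HasDerivAt (jacobi α β n)
      ((∑ k ∈ range n, (k + 1) * jacobiCoeff α β n (k + 1) * ((x - 1) / 2) ^ k) / 2) x := by
  have hlin : HasDerivAt (fun x : ℝ ↦ (x - 1) / 2) (1 / 2) x :=
    ((hasDerivAt_id x).sub_const 1).div_const 2
  have := (hasDerivAt_sum_range_mul_pow (jacobiCoeff α β n) n ((x - 1) / 2)).comp x hlin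
  rwa [mul_one_div] at this

lemma succ_mul_jacobiCoeff_succ (α : ℝ) {n k : ℕ} (hk : k + 2 ≤ n) :
    (k + 1) * jacobiCoeff α α n (k + 1) =
      2 * (n - k) * jacobiCoeff α α n k + (n + α) * jacobiCoeff (α + 1) (α + 1) (n - 2) k := by
  obtain ⟨j, rfl⟩ : ∃ j, n = k + j + 2 := ⟨n - k - 2, by omega⟩
  simp only [jacobiCoeff]
  rw [show k + j + 2 - (k + 1) = j + 1 by omega, show k + j + 2 - k = j + 1 + 1 by omega,
    show k + j + 2 - 2 = k + j by omega, show k + j - k = j by omega]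
  have h₁ : poch (α + (k + 1 : ℕ) + 1) (j + 1) = poch (α + k + 2) j * (α + k + j + 2) := by
    rw [show α + (k + 1 : ℕ) + 1 = α + k + 2 by push_cast; ring, poch_succ_right]
    ring
  have h₂ : poch (α + k + 1) (j + 1 + 1) =
      (α + k + 1) * (poch (α + k + 2) j * (α + k + j + 2)) := by
    rw [poch_succ_left, poch_succ_right, show α + k + 1 + 1 = α + k + 2 by ring]
    ring
  have h₃ : poch (α + 1 + k + 1) j = poch (α + k + 2) j := by
    congr 1
    ring
  have h₄ : poch ((k + j : ℕ) + (α + 1) + (α + 1) + 1) k =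
      poch ((k + j + 2 : ℕ) + α + α + 1) k := by
    push_cast
    congr 1
    ring
  rw [h₁, h₂, h₃, h₄, poch_succ_right]
  simp only [Nat.factorial_succ]
  push_cast
  field_simp
  -- after cancelling, `n + 2α + 1 + k = 2 (α + k + 1) + (n - k - 1)`
  ring

lemma succ_mul_jacobiCoeff_self (α : ℝ) (k : ℕ) :
    (k + 1) * jacobiCoeff α α (k + 1) (k + 1) = 2 * jacobiCoeff α α (k + 1) k := by
  simp only [jacobiCoeff, Nat.sub_self, show k + 1 - k = 1 by omega, poch_succ_right]
  simp only [poch, range_zero, prod_empty, Nat.factorial_succ]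
  push_cast
  field_simp
  ring

lemma sum_succ_mul_jacobiCoeff_succ (α t : ℝ) {n : ℕ} (hn : 2 ≤ n) :
    ∑ k ∈ range n, (k + 1) * jacobiCoeff α α n (k + 1) * t ^ k =
      ∑ k ∈ range (n + 1), 2 * (n - k) * jacobiCoeff α α n k * t ^ k +
        (n + α) * ∑ k ∈ range (n - 2 + 1), jacobiCoeff (α + 1) (α + 1) (n - 2) k * t ^ k := by
  obtain ⟨m, rfl⟩ : ∃ m, n = m + 2 := ⟨n - 2, by omega⟩
  have hbody : ∑ k ∈ range (m + 1), (k + 1) * jacobiCoeff α α (m + 2) (k + 1) * t ^ k =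
      ∑ k ∈ range (m + 1), 2 * ((m + 2 : ℕ) - k) * jacobiCoeff α α (m + 2) k * t ^ k +
        ((m + 2 : ℕ) + α) * ∑ k ∈ range (m + 1), jacobiCoeff (α + 1) (α + 1) m k * t ^ k := by
    rw [mul_sum, ← sum_add_distrib]
    refine sum_congr rfl fun k hk ↦ ?_
    rw [succ_mul_jacobiCoeff_succ α (by rw [mem_range] at hk; omega), Nat.add_sub_cancel]
    ring
  rw [Nat.add_sub_cancel, sum_range_succ, hbody, sum_range_succ _ (m + 2),
    sum_range_succ _ (m + 1)]
  linear_combination (norm := (push_cast; ring)) t ^ (m + 1) * succ_mul_jacobiCoeff_self α (m + 1)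

theorem stmt7 (α x : ℝ) (n : ℕ) (hn : 2 ≤ n) :
    2 * x * deriv (jacobi α α n) x =
      2 * n * jacobi α α n x + (n + α) * jacobi (α + 1) (α + 1) (n - 2) x := by
  set t := (x - 1) / 2 with ht
  have hx : x = 2 * t + 1 := by
    rw [ht]
    ring
  have hsplit : 2 * n * ∑ k ∈ range (n + 1), jacobiCoeff α α n k * t ^ k =
      2 * ∑ k ∈ range (n + 1), k * jacobiCoeff α α n k * t ^ k +
        ∑ k ∈ range (n + 1), 2 * (n - k) * jacobiCoeff α α n k * t ^ k := by
    rw [mul_sum, mul_sum, ← sum_add_distrib]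
    exact sum_congr rfl fun k _ ↦ by ring
  rw [(hasDerivAt_jacobi α α n x).deriv, jacobi_eq_sum, jacobi_eq_sum, ← ht]
  linear_combination
    (∑ k ∈ range n, (k + 1) * jacobiCoeff α α n (k + 1) * t ^ k) * hx +
    2 * mul_sum_range_succ_mul_pow (jacobiCoeff α α n) n t +
    sum_succ_mul_jacobiCoeff_succ α t hn - hsplit
end

section
/- (Laguerre convolution formula) For every nonnegative integer n and arbitrary parameters alpha, beta, the sum over k from 0 to n of L_k^{(alpha)}(x) L_{n-k}^{(beta)}(y) equals L_n^{(alpha+beta+1)}(x+y). -/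
/-! Since `poch (α + k + 1) (n - k) / (n - k)! = multichoose (α + k + 1) (n - k)`, the Laguerre
polynomial is `L_n^α(x) = ∑_{i + a = n} (-x)^i / i! · multichoose (α + i + 1) a`. The left-hand side
is then a sum over `i + a + j + b = n`; regrouping it by `(i + j, a + b)`, the Chu–Vandermonde
identity for `multichoose` collapses the sum over `a + b`, and the exponential form of the binomial
theorem collapses the sum over `i + j` into `(-(x + y))^(i + j) / (i + j)!`. -/

open Finset

theorem Ring.multichoose_add {R : Type*} [CommRing R] [BinomialRing R] (r s : R) (k : ℕ) :
    Ring.multichoose (r + s) k =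
      ∑ ij ∈ antidiagonal k, Ring.multichoose r ij.1 * Ring.multichoose s ij.2 := by
  -- Chu–Vandermonde at `-r, -s`, as `choose (-r) k = (-1)^k • multichoose r k`
  have h := Ring.add_choose_eq k (Commute.all (-r) (-s))
  simp only [← neg_add, Ring.choose_neg'] at h
  rw [← smul_left_cancel_iff (Int.negOnePow k), h, smul_sum]
  refine sum_congr rfl fun ij hij => ?_
  rw [HasAntidiagonal.mem_antidiagonal] at hij
  rw [smul_mul_smul_comm, ← hij, Nat.cast_add, Int.negOnePow_add]

theorem add_pow_div_factorial {K : Type*} [Field K] [CharZero K] (x y : K) (m : ℕ) :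
    (x + y) ^ m / m.factorial =
      ∑ p ∈ antidiagonal m, x ^ p.1 / p.1.factorial * (y ^ p.2 / p.2.factorial) := by
  rw [(Commute.all x y).add_pow', sum_div]
  refine sum_congr rfl fun p hp => ?_
  rw [HasAntidiagonal.mem_antidiagonal] at hp
  subst hp
  have hfac := Nat.cast_ne_zero (R := K) |>.mpr (p.1 + p.2).factorial_ne_zero
  rw [nsmul_eq_mul, Nat.cast_add_choose]
  field_simp

theorem Finset.Nat.sum_antidiagonal_antidiagonal_comm {M : Type*} [AddCommMonoid M] (n : ℕ)
    (f : ℕ → ℕ → ℕ → ℕ → M) :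
    ∑ kl ∈ antidiagonal n, ∑ ia ∈ antidiagonal kl.1, ∑ jb ∈ antidiagonal kl.2,
        f ia.1 ia.2 jb.1 jb.2 =
      ∑ ms ∈ antidiagonal n, ∑ ij ∈ antidiagonal ms.1, ∑ ab ∈ antidiagonal ms.2,
        f ij.1 ab.1 ij.2 ab.2 := by
  simp only [sum_sigma']
  let swap : (Σ _ : ℕ × ℕ, Σ _ : ℕ × ℕ, ℕ × ℕ) → (Σ _ : ℕ × ℕ, Σ _ : ℕ × ℕ, ℕ × ℕ) :=
    fun ⟨_, ia, jb⟩ => ⟨(ia.1 + jb.1, ia.2 + jb.2), (ia.1, jb.1), (ia.2, jb.2)⟩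
  refine sum_nbij' swap swap ?_ ?_ ?_ ?_ fun _ _ => rfl <;>
    rintro ⟨⟨k, l⟩, ⟨i, a⟩, ⟨j, b⟩⟩ h <;>
    simp_all [swap, mem_sigma, HasAntidiagonal.mem_antidiagonal] <;> omega

theorem poch_eq_eval_ascPochhammer (a : ℝ) (k : ℕ) : poch a k = (ascPochhammer ℝ k).eval a := by
  induction k with
  | zero => simp [poch]
  | succ k ih => rw [poch, prod_range_succ, ← poch, ih, ascPochhammer_succ_eval]

theorem poch_div_factorial_eq_multichoose (a : ℝ) (k : ℕ) :
    poch a k / k.factorial = Ring.multichoose a k := by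
  rw [div_eq_iff (by positivity), mul_comm, ← nsmul_eq_mul,
    Ring.factorial_nsmul_multichoose_eq_ascPochhammer, Polynomial.ascPochhammer_smeval_eq_eval,
    poch_eq_eval_ascPochhammer]

theorem lag_eq_sum_antidiagonal (α : ℝ) (n : ℕ) (x : ℝ) :
    lag α n x = ∑ p ∈ antidiagonal n,
      (-x) ^ p.1 / p.1.factorial * Ring.multichoose (α + p.1 + 1) p.2 := by
  rw [Nat.sum_antidiagonal_eq_sum_range_succ_mk, lag]
  refine sum_congr rfl fun k _ => ?_
  rw [← poch_div_factorial_eq_multichoose, neg_pow]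
  ring

theorem stmt17 (α β x y : ℝ) (n : ℕ) :
    ∑ k ∈ Finset.range (n + 1), lag α k x * lag β (n - k) y =
      lag (α + β + 1) n (x + y) := by
  calc ∑ k ∈ range (n + 1), lag α k x * lag β (n - k) y
      = ∑ kl ∈ antidiagonal n, lag α kl.1 x * lag β kl.2 y :=
        (Nat.sum_antidiagonal_eq_sum_range_succ (fun k l => lag α k x * lag β l y) n).symm
    _ = ∑ kl ∈ antidiagonal n, ∑ ia ∈ antidiagonal kl.1, ∑ jb ∈ antidiagonal kl.2,
          (-x) ^ ia.1 / ia.1.factorial * Ring.multichoose (α + ia.1 + 1) ia.2 *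
            ((-y) ^ jb.1 / jb.1.factorial * Ring.multichoose (β + jb.1 + 1) jb.2) := by
        simp_rw [lag_eq_sum_antidiagonal, sum_mul_sum]
    _ = ∑ ms ∈ antidiagonal n, ∑ ij ∈ antidiagonal ms.1, ∑ ab ∈ antidiagonal ms.2,
          (-x) ^ ij.1 / ij.1.factorial * Ring.multichoose (α + ij.1 + 1) ab.1 *
            ((-y) ^ ij.2 / ij.2.factorial * Ring.multichoose (β + ij.2 + 1) ab.2) :=
        Nat.sum_antidiagonal_antidiagonal_comm n fun i a j b =>
          (-x) ^ i / i.factorial * Ring.multichoose (α + i + 1) a *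
            ((-y) ^ j / j.factorial * Ring.multichoose (β + j + 1) b)
    _ = lag (α + β + 1) n (x + y) := by
        rw [lag_eq_sum_antidiagonal]
        refine sum_congr rfl fun ms _ => ?_
        rw [neg_add, add_pow_div_factorial, sum_mul]
        refine sum_congr rfl fun ij hij => ?_
        rw [HasAntidiagonal.mem_antidiagonal] at hij
        have hparam : α + β + 1 + (ms.1 : ℝ) + 1 = (α + ij.1 + 1) + (β + ij.2 + 1) := by
          rw [← hij, Nat.cast_add]; ring
        rw [hparam, Ring.multichoose_add, mul_sum]
        exact sum_congr rfl fun _ _ => by ring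
end
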